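/- Let 0 < β < 1, let F_f, F_r be positive integers, and let m, n ∈ [-1,1], G ≥ 0. Suppose X_{Δr} satisfies X_{Δr} = β^{F_r} X_{Δr} + (1-β) F_r β^{F_r-1} ((β^{F_f}-1) mG + nG - β^{F_f} X_B), where X_B = ((β^{F_r}(1-β^{F_f}) m + (1-β^{F_r}) n)/(1-β^{F_f+F_r})) G. Then X_{Δr} = (F_r β^{F_r-1}(1-β)(1-β^{F_f}) / ((1-β^{F_r})(1-β^{F_f+F_r}))) · (n-m) · G. -/

import Mathlib

/-
With a = β^F_f and b = β^F_r, the forget-phase bias enters the retain update only through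
(a - 1) m G + n G - a X_B, and clearing the denominator 1 - ab of X_B collapses it to
(1 - a)(n - m) G / (1 - ab). The retain recursion is then an affine fixed-point equation
x = b x + c with b < 1, so x = c / (1 - b).
-/

theorem eq_div_one_sub_of_eq_mul_add {K : Type*} [Field K] {x a c : K} (ha : a ≠ 1)
    (h : x = a * x + c) : x = c / (1 - a) := by
  rw [eq_div_iff (sub_ne_zero.mpr ha.symm)]
  linear_combination h

theorem retain_drift_eq_of_steady_bias {K : Type*} [Field K] {a b : K} (hab : a * b ≠ 1)
    (m n G : K) :
    (a - 1) * (m * G) + n * G - a * ((b * (1 - a) * m + (1 - b) * n) / (1 - a * b) * G) =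
      (1 - a) * (n - m) * G / (1 - a * b) := by
  have hD : 1 - a * b ≠ 0 := sub_ne_zero.mpr hab.symm
  field_simp
  ring

theorem stmt_6_general (β : ℝ) (hβ0 : 0 < β) (hβ1 : β < 1)
    (Ff Fr : ℕ) (hFr : 0 < Fr)
    (m n G : ℝ)
    (XB XΔr : ℝ)
    (hXB : XB = ((β ^ Fr * (1 - β ^ Ff) * m + (1 - β ^ Fr) * n) / (1 - β ^ (Ff + Fr))) * G)
    (hXΔr : XΔr = β ^ Fr * XΔr + (1 - β) * Fr * β ^ (Fr - 1) *
      ((β ^ Ff - 1) * (m * G) + n * G - β ^ Ff * XB)) :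
    XΔr = (Fr * β ^ (Fr - 1) * (1 - β) * (1 - β ^ Ff) /
      ((1 - β ^ Fr) * (1 - β ^ (Ff + Fr)))) * (n - m) * G := by
  have hFr_lt : β ^ Fr < 1 := pow_lt_one₀ hβ0.le hβ1 hFr.ne'
  have hF_lt : β ^ (Ff + Fr) < 1 := pow_lt_one₀ hβ0.le hβ1 (by omega)
  rw [pow_add] at hXB hF_lt ⊢
  rw [hXB, retain_drift_eq_of_steady_bias hF_lt.ne] at hXΔr
  rw [eq_div_one_sub_of_eq_mul_add hFr_lt.ne hXΔr]
  have hD : 1 - β ^ Ff * β ^ Fr ≠ 0 := sub_ne_zero.mpr hF_lt.ne'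
  have hDr : 1 - β ^ Fr ≠ 0 := sub_ne_zero.mpr hFr_lt.ne'
  field_simp

theorem stmt_6 (β : ℝ) (hβ0 : 0 < β) (hβ1 : β < 1)
    (Ff Fr : ℕ) (hFf : 0 < Ff) (hFr : 0 < Fr)
    (m n G : ℝ) (hm : m ∈ Set.Icc (-1 : ℝ) 1) (hn : n ∈ Set.Icc (-1 : ℝ) 1) (hG : 0 ≤ G)
    (XB XΔr : ℝ)
    (hXB : XB = ((β ^ Fr * (1 - β ^ Ff) * m + (1 - β ^ Fr) * n) / (1 - β ^ (Ff + Fr))) * G)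
    (hXΔr : XΔr = β ^ Fr * XΔr + (1 - β) * Fr * β ^ (Fr - 1) *
      ((β ^ Ff - 1) * (m * G) + n * G - β ^ Ff * XB)) :
    XΔr = (Fr * β ^ (Fr - 1) * (1 - β) * (1 - β ^ Ff) /
      ((1 - β ^ Fr) * (1 - β ^ (Ff + Fr)))) * (n - m) * G :=
  stmt_6_general β hβ0 hβ1 Ff Fr hFr m n G XB XΔr hXB hXΔr
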